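/- arXiv:math/0212414 — 2 statements merged into one kernel-verified Lean document; each statement's English description precedes it below -/
import Mathlib

section
/- One step of the perturbed (adaptive) Richardson iteration: in the setting of the Richardson iteration, suppose ε ≥ 0 and that for some n ≥ 1 there are elements V, W ∈ H with ‖F − V‖ ≤ ε and ‖A U^{n−1} − W‖ ≤ ε, and Uⁿ = U^{n−1} + τ(V − W). Then ‖U − Uⁿ‖ ≤ ρ ‖U − U^{n−1}‖ + 2τε. -/
open scoped RealInnerProductSpace

/-!
The error satisfies `U - Uⁿ = (1 - τA)(U - U^{n-1}) + τ((F - V) - (A U^{n-1} - W))`. The operator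
`1 - τA` is symmetric with quadratic form `‖v‖² - τ⟪Av, v⟫` lying between `(1 - τλmax)‖v‖²` and
`(1 - τλmin)‖v‖²`, and the norm of a symmetric operator is the supremum of its Rayleigh quotient
in absolute value, so `‖1 - τA‖ ≤ ρ`; the perturbation term has norm at most `2τε`.
-/

theorem ContinuousLinearMap.norm_le_of_abs_re_inner_self_le {𝕜 E : Type*} [RCLike 𝕜]
    [NormedAddCommGroup E] [InnerProductSpace 𝕜 E] {T : E →L[𝕜] E}
    (hT : (T : E →ₗ[𝕜] E).IsSymmetric) {c : ℝ} (hc : 0 ≤ c)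
    (h : ∀ x, |RCLike.re (inner 𝕜 (T x) x)| ≤ c * ‖x‖ ^ 2) : ‖T‖ ≤ c := by
  rw [T.norm_eq_iSup_rayleighQuotient hT]
  refine ciSup_le fun x => ?_
  rw [rayleighQuotient, reApplyInnerSelf_apply, abs_div, abs_sq]
  exact div_le_of_le_mul₀ (sq_nonneg _) hc (h x)

theorem norm_one_sub_smul_le_max_of_inner_bounds {H : Type*} [NormedAddCommGroup H]
    [InnerProductSpace ℝ H] {A : H →L[ℝ] H} (hA : (A : H →ₗ[ℝ] H).IsSymmetric)
    {lmin lmax τ : ℝ} (hminmax : lmin ≤ lmax) (hτ : 0 ≤ τ)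
    (hcoer : ∀ v : H, lmin * ‖v‖ ^ 2 ≤ ⟪A v, v⟫) (hbound : ∀ v : H, ⟪A v, v⟫ ≤ lmax * ‖v‖ ^ 2) :
    ‖1 - τ • A‖ ≤ max (1 - τ * lmin) (τ * lmax - 1) := by
  set ρ := max (1 - τ * lmin) (τ * lmax - 1)
  have hρmin : 1 - τ * lmin ≤ ρ := le_max_left _ _
  have hρmax : τ * lmax - 1 ≤ ρ := le_max_right _ _
  have hsymm : ((1 - τ • A : H →L[ℝ] H) : H →ₗ[ℝ] H).IsSymmetric :=
    LinearMap.IsSymmetric.one.sub (hA.smul (conj_trivial τ))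
  refine ContinuousLinearMap.norm_le_of_abs_re_inner_self_le hsymm ?_ fun v => ?_
  · linarith [mul_nonneg hτ (sub_nonneg.2 hminmax)]
  · have hquad : ⟪(1 - τ • A) v, v⟫ = ‖v‖ ^ 2 - τ * ⟪A v, v⟫ := by
      simp [inner_sub_left, real_inner_smul_left]
    rw [RCLike.re_to_real, hquad, abs_le]
    have hlow := mul_le_mul_of_nonneg_left (hcoer v) hτ
    have hupp := mul_le_mul_of_nonneg_left (hbound v) hτ
    have hρmin_sq := mul_le_mul_of_nonneg_right hρmin (sq_nonneg ‖v‖)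
    have hρmax_sq := mul_le_mul_of_nonneg_right hρmax (sq_nonneg ‖v‖)
    constructor <;> linarith

theorem perturbed_richardson_step_general
    {H : Type*} [NormedAddCommGroup H] [InnerProductSpace ℝ H]
    (A : H →L[ℝ] H) (hsa : ∀ u v : H, ⟪A u, v⟫ = ⟪u, A v⟫)
    (lmin lmax : ℝ) (hminmax : lmin ≤ lmax)
    (hcoer : ∀ v : H, lmin * ‖v‖ ^ 2 ≤ ⟪A v, v⟫)
    (hbound : ∀ v : H, ⟪A v, v⟫ ≤ lmax * ‖v‖ ^ 2)
    (F U : H) (hAU : A U = F)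
    (τ : ℝ) (hτ0 : 0 < τ)
    (ρ : ℝ) (hρ : ρ = max (1 - τ * lmin) (τ * lmax - 1))
    (ε : ℝ)
    (Uprev Un V W : H)
    (hV : ‖F - V‖ ≤ ε) (hW : ‖A Uprev - W‖ ≤ ε)
    (hUn : Un = Uprev + τ • (V - W)) :
    ‖U - Un‖ ≤ ρ * ‖U - Uprev‖ + 2 * τ * ε := by
  have hcontract : ‖1 - τ • A‖ ≤ ρ :=
    hρ ▸ norm_one_sub_smul_le_max_of_inner_bounds hsa hminmax hτ0.le hcoer hbound
  have herror : U - Un = (1 - τ • A) (U - Uprev) + τ • ((F - V) - (A Uprev - W)) := by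
    simp only [sub_apply, one_apply_eq_self, smul_apply, map_sub, hAU, hUn]
    module
  have hperturb : ‖(F - V) - (A Uprev - W)‖ ≤ 2 * ε := by
    linarith [norm_sub_le (F - V) (A Uprev - W)]
  calc ‖U - Un‖ ≤ ‖(1 - τ • A) (U - Uprev)‖ + ‖τ • ((F - V) - (A Uprev - W))‖ :=
        herror ▸ norm_add_le _ _
    _ ≤ ρ * ‖U - Uprev‖ + τ * (2 * ε) := by
        rw [norm_smul, Real.norm_of_nonneg hτ0.le]
        gcongr
        exact ((1 - τ • A).le_opNorm _).trans (by gcongr)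
    _ = ρ * ‖U - Uprev‖ + 2 * τ * ε := by ring

/-- One step of the perturbed (adaptive) Richardson iteration: in the
Richardson setting, if `‖F - V‖ ≤ ε`, `‖A U^{n-1} - W‖ ≤ ε` and
`Uⁿ = U^{n-1} + τ(V - W)`, then `‖U - Uⁿ‖ ≤ ρ ‖U - U^{n-1}‖ + 2τε`. -/
theorem perturbed_richardson_step
    {H : Type*} [NormedAddCommGroup H] [InnerProductSpace ℝ H] [CompleteSpace H]
    (A : H →L[ℝ] H) (hsa : ∀ u v : H, ⟪A u, v⟫ = ⟪u, A v⟫)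
    (lmin lmax : ℝ) (hlmin : 0 < lmin) (hminmax : lmin ≤ lmax)
    (hcoer : ∀ v : H, lmin * ‖v‖ ^ 2 ≤ ⟪A v, v⟫)
    (hbound : ∀ v : H, ⟪A v, v⟫ ≤ lmax * ‖v‖ ^ 2)
    (F U : H) (hAU : A U = F)
    (τ : ℝ) (hτ0 : 0 < τ) (hτ : τ < 2 / lmax)
    (ρ : ℝ) (hρ : ρ = max (1 - τ * lmin) (τ * lmax - 1))
    (ε : ℝ) (hε : 0 ≤ ε)
    (Uprev Un V W : H)
    (hV : ‖F - V‖ ≤ ε) (hW : ‖A Uprev - W‖ ≤ ε)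
    (hUn : Un = Uprev + τ • (V - W)) :
    ‖U - Un‖ ≤ ρ * ‖U - Uprev‖ + 2 * τ * ε :=
  perturbed_richardson_step_general A hsa lmin lmax hminmax hcoer hbound F U hAU τ hτ0 ρ hρ ε Uprev
    Un V W hV hW hUn
end

section
/- Dual norm equivalence induced by a Riesz basis: let X be a real Banach space, I a countable index type, and T : ℓ²(I) → X a bounded linear bijection such that c‖U‖ ≤ ‖T U‖ ≤ C‖U‖ for all U ∈ ℓ²(I), where 0 < c ≤ C. Set ψ_λ := T(e_λ), where (e_λ) is the standard orthonormal basis of ℓ²(I). Then for every continuous linear functional f ∈ X', the family (f(ψ_λ))_{λ∈I} is square-summable and c‖f‖_{X'} ≤ ( Σ_λ |f(ψ_λ)|² )^{1/2} ≤ C‖f‖_{X'}. -/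
/-! The dual norm of `f` is transported to the dual of `ℓ²(I)` as the norm of `f ∘ T`, up to the
factors `c` and `C`: `‖f ∘ T‖ ≤ ‖f‖ ‖T‖ ≤ C ‖f‖`, and since `T` is onto with `‖U‖ ≤ ‖T U‖ / c`,
`‖f‖ ≤ ‖f ∘ T‖ / c`. By the Riesz representation on `ℓ²(I)`, `f ∘ T = ⟪V, ·⟫` for some `V`
whose coordinates are `V λ = f(ψ_λ)`, so `Σ_λ |f(ψ_λ)|² = ‖V‖² = ‖f ∘ T‖²`. -/

theorem lp.hasSum_sq_norm_apply_single {ι 𝕜 : Type*} [RCLike 𝕜] [DecidableEq ι]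
    (g : lp (fun _ : ι => 𝕜) 2 →L[𝕜] 𝕜) :
    HasSum (fun i => ‖g (lp.single 2 i 1)‖ ^ 2) (‖g‖ ^ 2) := by
  obtain ⟨V, rfl⟩ := (InnerProductSpace.toDual 𝕜 _).surjective g
  simpa [lp.inner_single_right] using lp.hasSum_norm (p := 2) (by norm_num) V

theorem ContinuousLinearMap.mul_opNorm_le_opNorm_comp {𝕜 E F G : Type*}
    [NontriviallyNormedField 𝕜] [SeminormedAddCommGroup E] [SeminormedAddCommGroup F]
    [SeminormedAddCommGroup G] [NormedSpace 𝕜 E] [NormedSpace 𝕜 F] [NormedSpace 𝕜 G]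
    {T : E →L[𝕜] F} (hT : Function.Surjective T) {c : ℝ} (hc : 0 < c)
    (hlow : ∀ x, c * ‖x‖ ≤ ‖T x‖) (g : F →L[𝕜] G) : c * ‖g‖ ≤ ‖g.comp T‖ := by
  rw [mul_comm, ← le_div_iff₀ hc]
  refine opNorm_le_bound _ (by positivity) fun y => ?_
  obtain ⟨x, rfl⟩ := hT y
  calc ‖g (T x)‖ ≤ ‖g.comp T‖ * ‖x‖ := (g.comp T).le_opNorm x
    _ ≤ ‖g.comp T‖ * (‖T x‖ / c) := by
      gcongr
      rw [le_div_iff₀ hc, mul_comm]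
      exact hlow x
    _ = ‖g.comp T‖ / c * ‖T x‖ := by ring

theorem riesz_basis_dual_norm_equivalence_general
    {X : Type*} [NormedAddCommGroup X] [NormedSpace ℝ X]
    {I : Type*} [DecidableEq I]
    (T : lp (fun _ : I => ℝ) 2 →L[ℝ] X) (hbij : Function.Bijective T)
    (c C : ℝ) (hc : 0 < c) (hcC : c ≤ C)
    (hlow : ∀ U : lp (fun _ : I => ℝ) 2, c * ‖U‖ ≤ ‖T U‖)
    (hup : ∀ U : lp (fun _ : I => ℝ) 2, ‖T U‖ ≤ C * ‖U‖)
    (f : X →L[ℝ] ℝ) :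
    Summable (fun l : I => (f (T (lp.single 2 l 1))) ^ 2) ∧
    c * ‖f‖ ≤ Real.sqrt (∑' l : I, (f (T (lp.single 2 l 1))) ^ 2) ∧
    Real.sqrt (∑' l : I, (f (T (lp.single 2 l 1))) ^ 2) ≤ C * ‖f‖ := by
  have hsum := lp.hasSum_sq_norm_apply_single (f.comp T)
  simp only [Real.norm_eq_abs, sq_abs, ContinuousLinearMap.comp_apply] at hsum
  rw [hsum.tsum_eq, Real.sqrt_sq (norm_nonneg _)]
  refine ⟨hsum.summable, ContinuousLinearMap.mul_opNorm_le_opNorm_comp hbij.surjective hc hlow f,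
    ?_⟩
  calc ‖f.comp T‖ ≤ ‖f‖ * ‖T‖ := f.opNorm_comp_le T
    _ ≤ ‖f‖ * C := by gcongr; exact T.opNorm_le_bound (hc.le.trans hcC) hup
    _ = C * ‖f‖ := mul_comm _ _

/-- Dual norm equivalence induced by a Riesz basis: if
`T : ℓ²(I) → X` is a bounded linear bijection with `c‖U‖ ≤ ‖T U‖ ≤ C‖U‖`
(`0 < c ≤ C`) and `ψ_λ = T e_λ` for the standard basis `(e_λ)` of `ℓ²(I)`, then
for every `f ∈ X'` the family `(f(ψ_λ))` is square-summable and
`c‖f‖_{X'} ≤ (Σ_λ |f(ψ_λ)|²)^{1/2} ≤ C‖f‖_{X'}`. -/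
theorem riesz_basis_dual_norm_equivalence
    {X : Type*} [NormedAddCommGroup X] [NormedSpace ℝ X] [CompleteSpace X]
    {I : Type*} [Countable I] [DecidableEq I]
    (T : lp (fun _ : I => ℝ) 2 →L[ℝ] X) (hbij : Function.Bijective T)
    (c C : ℝ) (hc : 0 < c) (hcC : c ≤ C)
    (hlow : ∀ U : lp (fun _ : I => ℝ) 2, c * ‖U‖ ≤ ‖T U‖)
    (hup : ∀ U : lp (fun _ : I => ℝ) 2, ‖T U‖ ≤ C * ‖U‖)
    (f : X →L[ℝ] ℝ) :
    Summable (fun l : I => (f (T (lp.single 2 l 1))) ^ 2) ∧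
    c * ‖f‖ ≤ Real.sqrt (∑' l : I, (f (T (lp.single 2 l 1))) ^ 2) ∧
    Real.sqrt (∑' l : I, (f (T (lp.single 2 l 1))) ^ 2) ≤ C * ‖f‖ :=
  riesz_basis_dual_norm_equivalence_general T hbij c C hc hcC hlow hup f
end
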